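/- arXiv:2510.00007 — 2 statements merged into one kernel-verified Lean document; each statement's English description precedes it below -/
import Mathlib

section
/- For 0<q<1, write α = -log q. Then ∑_{m=1}^∞ m·q^m/(1-q^m) = π²/(6α²) + O(1/α) as α → 0⁺. In particular, if this sum is set equal to n, then α = π/√(6n)·(1+o(1)) as n → ∞. -/
/-!
With `q = e^{-α}`, expanding each `1/(1 - q^m)` as a geometric series and summing the double
series the other way gives `∑_{k ≥ 1} q^k/(1 - q^k)^2 = ∑_{k ≥ 1} 1/(2(cosh(kα) - 1))`.
Termwise `1/(2(cosh t - 1)) ≤ 1/t^2`, and these majorants sum to `π²/(6α²)`. The defect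
`1/t^2 - 1/(2(cosh t - 1))` is at most `1/2` (compare `cosh t` with `exp (t^2/2)`) and at most
`1/t^2`, hence at most `4/(1 + t)^2`; at `t = kα` this is dominated by the telescoping
`(4/α)(1/(1 + (k-1)α) - 1/(1 + kα))`, so the defect sums to at most `4/α`.
If the sum equals `n`, then `n α² = π²/6 + O(α)` with `α → 0`, which squeezes `α √(6n)/π` to `1`.
-/

open Real Filter Asymptotics
open scoped Topology

theorem exp_neg_div_one_sub_exp_neg_sq (t : ℝ) :
    exp (-t) / (1 - exp (-t)) ^ 2 = (2 * (cosh t - 1))⁻¹ := by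
  have h : (1 - exp (-t)) ^ 2 = exp (-t) * (2 * (cosh t - 1)) := by
    rw [cosh_eq, exp_neg]
    field_simp
    ring
  rw [h, div_mul_eq_div_div, div_self (exp_pos _).ne', one_div]

theorem sq_le_two_mul_cosh_sub_one (t : ℝ) : t ^ 2 ≤ 2 * (cosh t - 1) := by
  have hpartial : ∑ n ∈ Finset.range 2, t ^ (2 * n) / ((2 * n).factorial : ℝ) = 1 + t ^ 2 / 2 := by
    norm_num [Finset.sum_range_succ]
  have h := sum_le_hasSum (Finset.range 2) (fun n _ => by rw [pow_mul]; positivity) (hasSum_cosh t)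
  linarith

theorem inv_two_mul_cosh_sub_one_le {t : ℝ} (ht : t ≠ 0) : (2 * (cosh t - 1))⁻¹ ≤ (t ^ 2)⁻¹ :=
  inv_anti₀ (by positivity) (sq_le_two_mul_cosh_sub_one t)

theorem inv_sq_sub_inv_two_mul_cosh_sub_one_le_half {t : ℝ} (ht : t ≠ 0) :
    (t ^ 2)⁻¹ - (2 * (cosh t - 1))⁻¹ ≤ 1 / 2 := by
  set u := t ^ 2 / 2
  have hu : 0 < u := by positivity
  have hcosh : 2 * (cosh t - 1) ≤ 2 * (exp u - 1) := by
    gcongr; exact cosh_le_exp_half_sq t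
  have hexp : exp u * (1 - u) ≤ 1 := by
    have := mul_le_mul_of_nonneg_left (add_one_le_exp (-u)) (exp_pos u).le
    rwa [← exp_add, add_neg_cancel, exp_zero, neg_add_eq_sub] at this
  have hexp1 : 0 < exp u - 1 := by linarith [add_one_lt_exp hu.ne']
  calc (t ^ 2)⁻¹ - (2 * (cosh t - 1))⁻¹ ≤ (2 * u)⁻¹ - (2 * (exp u - 1))⁻¹ := by
        have : t ^ 2 = 2 * u := by ring
        rw [this]
        gcongr (2 * u)⁻¹ - ?_
        exact inv_anti₀ (by linarith [sq_le_two_mul_cosh_sub_one t]) hcosh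
    _ ≤ 1 / 2 := by
        rw [inv_sub_inv (by positivity) (by positivity), div_le_iff₀ (by positivity)]
        nlinarith

theorem inv_sq_sub_inv_two_mul_cosh_sub_one_le_four_mul {t : ℝ} (ht : 0 < t) :
    (t ^ 2)⁻¹ - (2 * (cosh t - 1))⁻¹ ≤ 4 * ((1 + t) ^ 2)⁻¹ := by
  rcases le_total t 1 with hle | hge
  · have hhalf := inv_sq_sub_inv_two_mul_cosh_sub_one_le_half ht.ne'
    have : 1 / 2 ≤ 4 * ((1 + t) ^ 2)⁻¹ := by
      rw [← div_eq_mul_inv, div_le_div_iff₀ (by norm_num) (by positivity)]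
      nlinarith
    linarith
  · have hcosh : 0 ≤ (2 * (cosh t - 1))⁻¹ := inv_nonneg.2 (by linarith [one_le_cosh t])
    have : (t ^ 2)⁻¹ ≤ 4 * ((1 + t) ^ 2)⁻¹ := by
      rw [← div_eq_mul_inv, inv_eq_one_div, div_le_div_iff₀ (by positivity) (by positivity)]
      nlinarith
    linarith

theorem sum_range_inv_one_add_succ_mul_sq_le {α : ℝ} (hα : 0 < α) (n : ℕ) :
    ∑ k ∈ Finset.range n, ((1 + (k + 1) * α) ^ 2)⁻¹ ≤ α⁻¹ := by
  set f : ℕ → ℝ := fun k => α⁻¹ * (1 + k * α)⁻¹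
  have hterm (k : ℕ) : ((1 + (k + 1) * α) ^ 2)⁻¹ ≤ f k - f (k + 1) := by
    have hk : 0 < 1 + k * α := by positivity
    have : f k - f (k + 1) = ((1 + k * α) * (1 + (k + 1) * α))⁻¹ := by
      simp only [f]; push_cast; field_simp; ring
    rw [this, sq]
    gcongr
    linarith
  calc ∑ k ∈ Finset.range n, ((1 + (k + 1) * α) ^ 2)⁻¹
      ≤ ∑ k ∈ Finset.range n, (f k - f (k + 1)) := Finset.sum_le_sum fun k _ => hterm k
    _ = f 0 - f n := Finset.sum_range_sub' f n
    _ ≤ f 0 := sub_le_self _ (by positivity)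
    _ = α⁻¹ := by simp [f]

theorem tsum_mul_pow_div_one_sub_pow_eq_tsum_pow_div_one_sub_pow_sq {𝕜 : Type*}
    [NontriviallyNormedField 𝕜] [CompleteSpace 𝕜] [NormSMulClass ℤ 𝕜] {r : 𝕜} (hr : ‖r‖ < 1) :
    ∑' m : ℕ, ((m : 𝕜) + 1) * r ^ (m + 1) / (1 - r ^ (m + 1)) =
      ∑' k : ℕ, r ^ (k + 1) / (1 - r ^ (k + 1)) ^ 2 := by
  -- Both sides are rearrangements of `∑ σ₁(n) rⁿ`.
  have hdivisor := tsum_pow_div_one_sub_eq_tsum_sigma hr 1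
  rw [← tsum_prod_pow_eq_tsum_sigma 1 hr] at hdivisor
  have hinner (d : ℕ+) :
      ∑' c : ℕ+, (c : 𝕜) ^ 1 * r ^ (d * c : ℕ) = r ^ (d : ℕ) / (1 - r ^ (d : ℕ)) ^ 2 := by
    have hrd : ‖r ^ (d : ℕ)‖ < 1 := by
      rw [norm_pow]; exact pow_lt_one₀ (norm_nonneg _) hr d.ne_zero
    rw [← tsum_coe_mul_geometric_of_norm_lt_one hrd,
      ← tsum_zero_pnat_eq_tsum_nat (hasSum_coe_mul_geometric_of_norm_lt_one hrd).summable]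
    simp [pow_mul]
  simp only [hinner] at hdivisor
  rw [tsum_pnat_eq_tsum_succ (f := fun n => (n : 𝕜) ^ 1 * r ^ n / (1 - r ^ n)),
    tsum_pnat_eq_tsum_succ (f := fun n => r ^ n / (1 - r ^ n) ^ 2)] at hdivisor
  simpa using hdivisor

theorem hasSum_inv_succ_mul_sq (α : ℝ) :
    HasSum (fun k : ℕ => (((k + 1) * α) ^ 2)⁻¹) (π ^ 2 / (6 * α ^ 2)) := by
  have h : HasSum (fun k : ℕ => (((k : ℝ) + 1) ^ 2)⁻¹) (π ^ 2 / 6) := by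
    simpa using (hasSum_nat_add_iff' 1).mpr hasSum_zeta_two
  rw [show π ^ 2 / (6 * α ^ 2) = (π ^ 2 / 6) * (α ^ 2)⁻¹ by ring]
  simpa only [mul_pow, mul_inv] using h.mul_right (α ^ 2)⁻¹

noncomputable def lambertSeries (α : ℝ) : ℝ :=
  ∑' m : ℕ, ((m : ℝ) + 1) * exp (-α) ^ (m + 1) / (1 - exp (-α) ^ (m + 1))

theorem lambertSeries_eq_tsum_inv_two_mul_cosh_sub_one {α : ℝ} (hα : 0 < α) :
    lambertSeries α = ∑' k : ℕ, (2 * (cosh ((k + 1) * α) - 1))⁻¹ := by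
  have hr : ‖exp (-α)‖ < 1 := by
    rw [norm_of_nonneg (exp_pos _).le, exp_lt_one_iff]; linarith
  rw [lambertSeries, tsum_mul_pow_div_one_sub_pow_eq_tsum_pow_div_one_sub_pow_sq hr]
  refine tsum_congr fun k => ?_
  rw [← exp_nat_mul, ← exp_neg_div_one_sub_exp_neg_sq]
  push_cast
  ring_nf

theorem summable_inv_two_mul_cosh_succ_mul_sub_one {α : ℝ} (hα : 0 < α) :
    Summable fun k : ℕ => (2 * (cosh ((k + 1) * α) - 1))⁻¹ :=
  (hasSum_inv_succ_mul_sq α).summable.of_nonneg_of_le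
    (fun k => inv_nonneg.2 (by linarith [one_le_cosh ((k + 1) * α)]))
    (fun k => inv_two_mul_cosh_sub_one_le (by positivity))

theorem lambertSeries_le {α : ℝ} (hα : 0 < α) : lambertSeries α ≤ π ^ 2 / (6 * α ^ 2) := by
  rw [lambertSeries_eq_tsum_inv_two_mul_cosh_sub_one hα, ← (hasSum_inv_succ_mul_sq α).tsum_eq]
  exact (summable_inv_two_mul_cosh_succ_mul_sub_one hα).tsum_le_tsum
    (fun k => inv_two_mul_cosh_sub_one_le (by positivity)) (hasSum_inv_succ_mul_sq α).summable

theorem sub_le_lambertSeries {α : ℝ} (hα : 0 < α) :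
    π ^ 2 / (6 * α ^ 2) - 4 / α ≤ lambertSeries α := by
  have hB := hasSum_inv_succ_mul_sq α
  have hG := summable_inv_two_mul_cosh_succ_mul_sub_one hα
  have hdiff : ∑' k : ℕ, ((((k + 1) * α) ^ 2)⁻¹ - (2 * (cosh ((k + 1) * α) - 1))⁻¹) ≤ 4 / α := by
    refine Real.tsum_le_of_sum_range_le
      (fun k => sub_nonneg.2 (inv_two_mul_cosh_sub_one_le (by positivity))) fun n => ?_
    calc ∑ k ∈ Finset.range n, ((((k + 1) * α) ^ 2)⁻¹ - (2 * (cosh ((k + 1) * α) - 1))⁻¹)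
        ≤ ∑ k ∈ Finset.range n, 4 * ((1 + (k + 1) * α) ^ 2)⁻¹ :=
          Finset.sum_le_sum fun k _ =>
            inv_sq_sub_inv_two_mul_cosh_sub_one_le_four_mul (by positivity)
      _ ≤ 4 / α := by
          rw [← Finset.mul_sum, div_eq_mul_inv]
          gcongr
          exact sum_range_inv_one_add_succ_mul_sq_le hα n
  rw [hB.summable.tsum_sub hG, hB.tsum_eq, ← lambertSeries_eq_tsum_inv_two_mul_cosh_sub_one hα]
    at hdiff
  linarith

theorem tendsto_div_div_sqrt_of_le_of_le {κ C : ℝ} (hκ : 0 < κ) {a : ℕ → ℝ} (ha : ∀ n, 0 < a n)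
    (hup : ∀ n : ℕ, (n : ℝ) ≤ κ ^ 2 / a n ^ 2) (hlow : ∀ n : ℕ, κ ^ 2 / a n ^ 2 - C / a n ≤ n) :
    Tendsto (fun n : ℕ => a n / (κ / √n)) atTop (𝓝 1) := by
  have hsq (n : ℕ) : (a n * √n / κ) ^ 2 = n * a n ^ 2 / κ ^ 2 := by
    rw [div_pow, mul_pow, sq_sqrt n.cast_nonneg]; ring
  have hle_one (n : ℕ) : a n * √n / κ ≤ 1 := by
    refine (sq_le_one_iff₀ (by have := ha n; positivity)).1 ?_
    have := hup n
    rw [le_div_iff₀ (pow_pos (ha n) 2)] at this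
    rw [hsq, div_le_one (by positivity)]
    exact this
  have hge (n : ℕ) : 1 - C / κ ^ 2 * a n ≤ a n * √n / κ := by
    have hlow' : κ ^ 2 - C * a n ≤ n * a n ^ 2 := by
      have := hlow n
      have ha' := ha n
      field_simp at this
      linarith
    have hr0 : 0 ≤ a n * √n / κ := by have := ha n; positivity
    calc 1 - C / κ ^ 2 * a n ≤ (a n * √n / κ) ^ 2 := by
          rw [hsq, le_div_iff₀ (by positivity)]; field_simp; linarith
      _ ≤ a n * √n / κ := by nlinarith [hle_one n]
  have hdecay : Tendsto (fun n : ℕ => κ / √n) atTop (𝓝 0) :=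
    tendsto_const_nhds.div_atTop (tendsto_sqrt_atTop.comp tendsto_natCast_atTop_atTop)
  have ha0 : Tendsto a atTop (𝓝 0) := by
    refine tendsto_of_tendsto_of_tendsto_of_le_of_le' tendsto_const_nhds hdecay
      (Eventually.of_forall fun n => (ha n).le) ?_
    filter_upwards [eventually_ge_atTop 1] with n hn
    have hsqrt : 0 < √(n : ℝ) := sqrt_pos.2 (by exact_mod_cast hn)
    have := hle_one n
    rw [div_le_one hκ] at this
    exact (le_div_iff₀ hsqrt).2 this
  have hlim : Tendsto (fun n => 1 - C / κ ^ 2 * a n) atTop (𝓝 1) := by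
    simpa using (ha0.const_mul (C / κ ^ 2)).const_sub 1
  simp_rw [div_div_eq_mul_div]
  exact tendsto_of_tendsto_of_tendsto_of_le_of_le hlim tendsto_const_nhds hge hle_one

/-- with `α = -log q`, `∑_{m≥1} m q^m/(1-q^m) = π²/(6α²) + O(1/α)` as `α → 0⁺`;
consequently, if the sum equals `n` then `α = π/√(6n)·(1+o(1))` as `n → ∞`. -/
theorem sum_m_qm_asymptotic :
    ((fun α : ℝ =>
        (∑' m : ℕ, ((m : ℝ) + 1) * exp (-α) ^ (m + 1) / (1 - exp (-α) ^ (m + 1)))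
          - π ^ 2 / (6 * α ^ 2)) =O[𝓝[>] (0 : ℝ)] fun α => 1 / α) ∧
    (∀ α : ℕ → ℝ, (∀ n, 0 < α n) →
      (∀ n : ℕ, (∑' m : ℕ,
          ((m : ℝ) + 1) * exp (-(α n)) ^ (m + 1) / (1 - exp (-(α n)) ^ (m + 1))) = n) →
      Tendsto (fun n : ℕ => α n / (π / Real.sqrt (6 * n))) atTop (𝓝 1)) := by
  refine ⟨isBigO_iff.2 ⟨4, eventually_nhdsWithin_of_forall fun α (hα : 0 < α) => ?_⟩,
    fun a ha hsum => ?_⟩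
  · have hup := lambertSeries_le hα
    have hlow := sub_le_lambertSeries hα
    rw [lambertSeries] at hup hlow
    rw [norm_eq_abs, norm_eq_abs, abs_of_pos (one_div_pos.2 hα), abs_sub_le_iff, mul_one_div]
    constructor <;> linarith
  · have hmain (α : ℝ) : π ^ 2 / (6 * α ^ 2) = (π / √6) ^ 2 / α ^ 2 := by
      rw [div_pow, sq_sqrt (by norm_num), div_div]
    have hup (n : ℕ) : (n : ℝ) ≤ (π / √6) ^ 2 / a n ^ 2 :=
      hsum n ▸ hmain (a n) ▸ lambertSeries_le (ha n)
    have hlow (n : ℕ) : (π / √6) ^ 2 / a n ^ 2 - 4 / a n ≤ n :=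
      hsum n ▸ hmain (a n) ▸ sub_le_lambertSeries (ha n)
    refine (tendsto_div_div_sqrt_of_le_of_le (by positivity) ha hup hlow).congr fun n => ?_
    rw [div_div, ← sqrt_mul (by norm_num)]
end

section
/- (Nash-Williams criterion, as used in the paper) Let λ = (λ₁ ≥ λ₂ ≥ ... ) be a partition of an even integer n, let K be its Durfee square size (the largest k with λ_k ≥ k), and for each k let R_k = λ_k - |{i : λ_i ≥ k}| be the k-th rank. Then λ is graphical (i.e., is the degree sequence of a simple graph) if and only if ∑_{l=1}^{k} R_l ≤ -k for all 1 ≤ k ≤ K. -/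
open scoped BigOperators

/-- The `k`-th largest part of a partition (`k ≥ 1`), i.e. `λ_k`; `0` if there are fewer
than `k` parts. -/
def partOf {n : ℕ} (p : n.Partition) (k : ℕ) : ℕ :=
  (p.parts.sort (· ≥ ·)).getD (k - 1) 0

/-- The `k`-th part of the conjugate partition, `λ'_k = |{i : λ_i ≥ k}|`. -/
def conjPart {n : ℕ} (p : n.Partition) (k : ℕ) : ℕ :=
  (p.parts.filter fun m => k ≤ m).card

/-- The Durfee square size: the largest `k` with `λ_k ≥ k`. -/
noncomputable def durfee {n : ℕ} (p : n.Partition) : ℕ :=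
  sSup {k : ℕ | k ≤ partOf p k}

/-- The `k`-th rank of Atkin, `R_k = λ_k - λ'_k`. -/
def rank {n : ℕ} (p : n.Partition) (k : ℕ) : ℤ :=
  (partOf p k : ℤ) - (conjPart p k : ℤ)

/-- A partition is graphical if its parts are exactly the positive vertex degrees of a
simple graph (zero-degree vertices allowed). -/
def IsGraphical {n : ℕ} (p : n.Partition) : Prop :=
  ∃ (N : ℕ) (G : SimpleGraph (Fin N)),
    (Finset.univ.val.map fun v => Set.ncard {w | G.Adj v w}).filter (fun d => 0 < d)
      = p.parts

/-!
For `k` inside the Durfee square every `λ_l` with `l ≤ k` is at least `k`, so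
`∑_{l ≤ k} λ'_l = k² + ∑_{i > k} min(k, λ_i)` and the `k`-th Nash-Williams inequality is the
`k`-th Erdős–Gallai inequality `∑_{i ≤ k} λ_i ≤ k(k-1) + ∑_{i > k} min(k, λ_i)`. Outside the
Durfee square `λ_{k+1} ≤ k`, and then the Erdős–Gallai inequality at `k` implies the one at `k + 1`.

Erdős–Gallai is necessary by double counting the edges at the `k` vertices of largest degree.
Sufficiency follows Choudum: lower by one the last positive entry `b` and the last entry `a` of
the block of maximal entries. The lowered sequence still satisfies Erdős–Gallai (at `k = λ_1` this
uses the parity of the sum), so it has a realization by induction; in it either `ab` is not an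
edge and can be added, or a counting argument yields an edge `xy` with `ax` and `by` non-edges,
and replacing `xy` by `ax, by` raises exactly the degrees of `a` and `b`.
-/

open Finset

namespace SimpleGraph

lemma ncard_neighborSet_eq_degree {V : Type*} (G : SimpleGraph V) (v : V)
    [Fintype (G.neighborSet v)] : (G.neighborSet v).ncard = G.degree v := by
  rw [Set.ncard_eq_toFinset_card', ← neighborFinset_def, card_neighborFinset_eq_degree]

variable {V : Type*} [Fintype V] {G : SimpleGraph V} [DecidableRel G.Adj] {a b x y : V}

lemma degree_eq_sum_ite (v : V) : G.degree v = ∑ w, if G.Adj v w then 1 else 0 := by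
  exact_mod_cast G.degree_eq_sum_if_adj (R := ℕ) v

variable [DecidableEq V]

lemma degree_sup_edge (hab : a ≠ b) (h : ¬ G.Adj a b) (v : V) :
    (G ⊔ edge a b).degree v = G.degree v + (if v = a then 1 else 0) + (if v = b then 1 else 0) := by
  have hpt : ∀ w, (if (G ⊔ edge a b).Adj v w then 1 else 0) = (if G.Adj v w then 1 else 0) +
      (if v = a ∧ w = b then 1 else 0) + (if v = b ∧ w = a then 1 else 0) := by
    intro w
    have := G.adj_comm a b
    simp only [sup_adj, edge_adj]
    split_ifs <;> grind
  rw [degree_eq_sum_ite, degree_eq_sum_ite, sum_congr rfl (fun w _ => hpt w)]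
  simp [sum_add_distrib, ite_and]

lemma degree_sdiff_edge (h : G.Adj x y) (v : V) :
    (G \ edge x y).degree v + (if v = x then 1 else 0) + (if v = y then 1 else 0) = G.degree v := by
  have hpt : ∀ w, (if (G \ edge x y).Adj v w then 1 else 0) +
      (if v = x ∧ w = y then 1 else 0) + (if v = y ∧ w = x then 1 else 0) =
        (if G.Adj v w then 1 else 0) := by
    intro w
    have := h.ne
    have := h.symm
    simp only [sdiff_adj, edge_adj]
    split_ifs <;> grind
  rw [degree_eq_sum_ite, degree_eq_sum_ite, ← sum_congr rfl (fun w _ => hpt w)]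
  simp [sum_add_distrib, ite_and]

lemma exists_degree_eq_of_swap (hxy : G.Adj x y) (hax : ¬ G.Adj a x) (hby : ¬ G.Adj b y)
    (hax' : a ≠ x) (hby' : b ≠ y) :
    ∃ (H : SimpleGraph V) (_ : DecidableRel H.Adj), ∀ v,
      H.degree v = G.degree v + (if v = a then 1 else 0) + (if v = b then 1 else 0) := by
  have h₁ : ¬ (G \ edge x y).Adj a x := fun h => hax h.1
  have h₂ : ¬ (G \ edge x y ⊔ edge a x).Adj b y := by
    simp only [sup_adj, sdiff_adj, edge_adj]
    rintro (⟨h, -⟩ | ⟨⟨rfl, hyx⟩ | ⟨rfl, hya⟩, -⟩)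
    exacts [hby h, hxy.ne hyx.symm, hax (hya ▸ hxy.symm)]
  refine ⟨G \ edge x y ⊔ edge a x ⊔ edge b y, inferInstance, fun v => ?_⟩
  have := degree_sdiff_edge hxy v
  rw [degree_sup_edge hby' h₂, degree_sup_edge hax' h₁]
  split_ifs at * <;> omega

lemma exists_adj_not_adj_of_degree_lt (hab : G.Adj a b) (hax : ¬ G.Adj a x)
    (hdeg : G.degree b < G.degree x) : ∃ y, G.Adj x y ∧ ¬ G.Adj b y ∧ b ≠ y := by
  by_contra! h
  have hsub : G.neighborFinset x ⊆ insert b ((G.neighborFinset b).erase a) := by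
    intro y hy
    rw [mem_neighborFinset] at hy
    rw [mem_insert, mem_erase, mem_neighborFinset]
    by_cases hby : b = y
    · exact Or.inl hby.symm
    · exact Or.inr ⟨fun hya => hax (hya ▸ hy.symm), by_contra fun h' => hby (h y hy h')⟩
  have := (card_le_card hsub).trans (card_insert_le _ _)
  rw [card_erase_of_mem (by simpa using hab.symm), card_neighborFinset_eq_degree,
    card_neighborFinset_eq_degree] at this
  have := G.degree_pos_iff_exists_adj b |>.2 ⟨a, hab.symm⟩
  omega

lemma exists_not_adj_degree_lt (hab : G.Adj a b)
    (hcard : #{x | x ≠ a ∧ G.degree x ≤ G.degree b} + G.degree a < Fintype.card V) :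
    ∃ x, x ≠ a ∧ ¬ G.Adj a x ∧ G.degree b < G.degree x := by
  by_contra! h
  set T : Finset V := {x | x ≠ a ∧ G.degree x ≤ G.degree b}
  have hsub : (insert a (G.neighborFinset a))ᶜ ⊆ T.erase b := by
    intro x hx
    simp only [mem_compl, mem_insert, mem_neighborFinset, not_or] at hx
    simp only [T, mem_erase, mem_filter, mem_univ, true_and]
    exact ⟨fun hxb => hx.2 (hxb ▸ hab), hx.1, h x hx.1 hx.2⟩
  have hbT : b ∈ T := by simp [T, hab.ne.symm]
  have := card_le_card hsub
  rw [card_compl, card_insert_of_notMem (by simp), card_neighborFinset_eq_degree,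
    card_erase_of_mem hbT] at this
  have := card_pos.2 ⟨b, hbT⟩
  omega

lemma exists_degree_eq_add_add (hab : a ≠ b)
    (hcard : #{x | x ≠ a ∧ G.degree x ≤ G.degree b} + G.degree a < Fintype.card V) :
    ∃ (H : SimpleGraph V) (_ : DecidableRel H.Adj), ∀ v,
      H.degree v = G.degree v + (if v = a then 1 else 0) + (if v = b then 1 else 0) := by
  by_cases hadj : G.Adj a b
  · obtain ⟨x, hxa, hax, hbx⟩ := exists_not_adj_degree_lt hadj hcard
    obtain ⟨y, hxy, hby, hby'⟩ := exists_adj_not_adj_of_degree_lt hadj hax hbx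
    exact exists_degree_eq_of_swap hxy hax hby hxa.symm hby'
  · exact ⟨G ⊔ edge a b, inferInstance, degree_sup_edge hab hadj⟩

lemma sum_degree_le (U : Finset V) :
    ∑ v ∈ U, G.degree v ≤ #U * (#U - 1) + ∑ v ∈ Uᶜ, min #U (G.degree v) := by
  have hsplit : ∀ v, G.degree v = #{w ∈ U | G.Adj v w} + #{w ∈ Uᶜ | G.Adj v w} := by
    intro v
    rw [← card_union_of_disjoint (disjoint_filter_filter disjoint_compl_right), ← filter_union,
      union_compl, ← card_neighborFinset_eq_degree]
    congr 1
    ext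
    simp
  have hinside : ∀ v ∈ U, #{w ∈ U | G.Adj v w} ≤ #U - 1 := fun v hv =>
    (card_le_card fun w hw => by
      simp only [mem_filter] at hw
      exact mem_erase.2 ⟨hw.2.ne.symm, hw.1⟩).trans (card_erase_of_mem hv).le
  have hcross : ∑ v ∈ U, #{w ∈ Uᶜ | G.Adj v w} = ∑ w ∈ Uᶜ, #{v ∈ U | G.Adj v w} :=
    sum_card_bipartiteAbove_eq_sum_card_bipartiteBelow _
  have houtside : ∀ w, #{v ∈ U | G.Adj v w} ≤ min #U (G.degree w) := fun w =>
    le_min (card_filter_le _ _) (by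
      rw [← card_neighborFinset_eq_degree]
      exact card_le_card fun v hv => by simpa [G.adj_comm] using (mem_filter.1 hv).2)
  calc ∑ v ∈ U, G.degree v
      = ∑ v ∈ U, #{w ∈ U | G.Adj v w} + ∑ w ∈ Uᶜ, #{v ∈ U | G.Adj v w} := by
        rw [← hcross, ← sum_add_distrib]
        exact sum_congr rfl fun v _ => hsplit v
    _ ≤ #U * (#U - 1) + ∑ v ∈ Uᶜ, min #U (G.degree v) := by
        gcongr
        · exact (sum_le_sum hinside).trans (by simp)
        · exact houtside _

end SimpleGraph

namespace ErdosGallai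

def headSum (d : ℕ → ℕ) (k : ℕ) : ℕ := ∑ j ∈ range k, d j

def tailSum (n : ℕ) (d : ℕ → ℕ) (k : ℕ) : ℕ := ∑ j ∈ Ico k n, min k (d j)

end ErdosGallai

open ErdosGallai in
def ErdosGallai (n : ℕ) (d : ℕ → ℕ) : Prop :=
  ∀ k, headSum d k ≤ k * (k - 1) + tailSum n d k

namespace ErdosGallai

variable {n : ℕ} {d D : ℕ → ℕ} {a b c k : ℕ}

lemma headSum_succ (d : ℕ → ℕ) (k : ℕ) : headSum d (k + 1) = headSum d k + d k :=
  sum_range_succ d k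

lemma headSum_of_le (hzero : ∀ j, n ≤ j → d j = 0) (hnk : n ≤ k) : headSum d k = headSum d n := by
  unfold headSum
  rw [← sum_range_add_sum_Ico _ hnk, sum_eq_zero fun j hj => hzero j (mem_Ico.1 hj).1, add_zero]

lemma headSum_const (h : ∀ j < k, d j = c) : headSum d k = k * c := by
  rw [headSum, sum_congr rfl fun j hj => h j (mem_range.1 hj), sum_const, card_range, smul_eq_mul]

lemma tailSum_le_min_add_tailSum_succ (n : ℕ) (d : ℕ → ℕ) (k : ℕ) :
    tailSum n d k ≤ min k (d k) + tailSum n d (k + 1) := by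
  rcases lt_or_ge k n with hkn | hkn
  · rw [tailSum, tailSum, sum_eq_sum_Ico_succ_bot hkn]
    gcongr with j
    omega
  · simp [tailSum, Ico_eq_empty_of_le hkn]

lemma headSum_succ_le (hk : d k ≤ k) (h : headSum d k ≤ k * (k - 1) + tailSum n d k) :
    headSum d (k + 1) ≤ (k + 1) * (k + 1 - 1) + tailSum n d (k + 1) := by
  have := tailSum_le_min_add_tailSum_succ n d k
  have : k * (k - 1) + 2 * k = (k + 1) * (k + 1 - 1) := by
    cases k <;> simp; ring
  rw [headSum_succ]
  omega

lemma headSum_le_of_degree_eq (G : SimpleGraph (Fin n)) [DecidableRel G.Adj]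
    (hG : ∀ v, G.degree v = d v) (hk : k ≤ n) :
    headSum d k ≤ k * (k - 1) + tailSum n d k := by
  set U : Finset (Fin n) := {v | v.val < k}
  have hU : U.map Fin.valEmbedding = range k := by
    ext j
    simp only [U, mem_map, mem_filter, mem_univ, true_and, Fin.valEmbedding_apply, mem_range]
    exact ⟨fun ⟨v, hv, hvj⟩ => hvj ▸ hv, fun hj => ⟨⟨j, by omega⟩, hj, rfl⟩⟩
  have hUc : Uᶜ.map Fin.valEmbedding = Ico k n := by
    ext j
    simp only [U, mem_map, mem_compl, mem_filter, mem_univ, true_and, Fin.valEmbedding_apply,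
      mem_Ico, not_lt]
    exact ⟨fun ⟨v, hv, hvj⟩ => hvj ▸ ⟨hv, v.2⟩, fun hj => ⟨⟨j, hj.2⟩, hj.1, rfl⟩⟩
  have hcard : #U = k := by rw [← card_map Fin.valEmbedding, hU, card_range]
  have := G.sum_degree_le U
  simp only [hG, hcard] at this
  rwa [headSum, tailSum, ← hU, ← hUc, sum_map, sum_map]

lemma headSum_eq_add (hd : ∀ j, d j = D j + (if j = a then 1 else 0) + (if j = b then 1 else 0))
    (k : ℕ) :
    headSum d k = headSum D k + (if a < k then 1 else 0) + (if b < k then 1 else 0) := by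
  simp only [headSum, hd, sum_add_distrib, sum_ite_eq', mem_range]

lemma tailSum_le_add (hd : ∀ j, d j = D j + (if j = a then 1 else 0) + (if j = b then 1 else 0))
    (k : ℕ) :
    tailSum n d k ≤ tailSum n D k + (if k ≤ a then 1 else 0) + (if k ≤ b then 1 else 0) := by
  calc tailSum n d k
      ≤ ∑ j ∈ Ico k n, (min k (D j) + (if j = a then 1 else 0) + (if j = b then 1 else 0)) := by
        refine sum_le_sum fun j _ => ?_
        rw [hd j]
        omega
    _ ≤ _ := by
        rw [sum_add_distrib, sum_add_distrib, sum_ite_eq', sum_ite_eq']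
        refine add_le_add (add_le_add le_rfl ?_) ?_ <;> split_ifs with h₁ h₂ <;> simp_all

lemma headSum_lt_of_const (hconst : ∀ j ≤ k, d j = c) (hkc : k < c) (hkb : k < b) (hbn : b < n)
    (hb : 0 < d b) (hbk : d b ≤ k)
    (h : headSum d (k + 1) ≤ (k + 1) * (k + 1 - 1) + tailSum n d (k + 1)) :
    headSum d k < k * (k - 1) + tailSum n d k := by
  set A := #{j ∈ Ico (k + 1) n | k < d j}
  have hsplit : tailSum n d k = k + ∑ j ∈ Ico (k + 1) n, min k (d j) := by
    rw [tailSum, sum_eq_sum_Ico_succ_bot (by omega), hconst k le_rfl, min_eq_left hkc.le]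
  have hsucc : tailSum n d (k + 1) = ∑ j ∈ Ico (k + 1) n, min k (d j) + A := by
    rw [tailSum, show A = ∑ j ∈ Ico (k + 1) n, if k < d j then 1 else 0 from card_filter _ _,
      ← sum_add_distrib]
    refine sum_congr rfl fun j _ => ?_
    split_ifs <;> omega
  have hlower : k * A + d b ≤ ∑ j ∈ Ico (k + 1) n, min k (d j) := by
    rw [← sum_filter_add_sum_filter_not (Ico (k + 1) n) (fun j => k < d j)]
    gcongr ?_ + ?_
    · rw [show k * A = ∑ _j ∈ {j ∈ Ico (k + 1) n | k < d j}, k by simp [A, mul_comm]]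
      exact sum_le_sum fun j hj => by simp at hj; omega
    · calc d b = min k (d b) := by omega
        _ ≤ _ := single_le_sum (f := fun j => min k (d j)) (fun _ _ => Nat.zero_le _)
          (by simp; omega)
  rw [headSum_const fun j hj => hconst j hj.le]
  rw [headSum_const fun j hj => hconst j (by omega)] at h
  have e1 : (k + 1) * c = k * c + c := by ring
  have e2 : (k + 1) * (k + 1 - 1) = k * (k - 1) + 2 * k := by cases k <;> simp; ring
  have e3 : k * (k - 1) + k = k * k := by cases k <;> simp; ring
  -- Erdős–Gallai at `k + 1` gives the strict inequality unless `A + k ≥ c`, and then the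
  -- `k + A` entries contributing `k` to `tailSum n d k`, together with `d b > 0`, suffice.
  rcases lt_or_ge (A + k) c with hA | hA
  · omega
  · have : k * c ≤ k * A + k * k := by rw [← mul_add]; exact Nat.mul_le_mul_left k (by omega)
    omega

lemma le_tailSum_decrement
    (hd : ∀ j, d j = D j + (if j = a then 1 else 0) + (if j = b then 1 else 0))
    (hab : a < b) (hbn : b < n) (htop : ∀ j ≤ a, d j = d 0) (hpos : ∀ j ≤ b, 0 < d j)
    (hzero : ∀ j, b < j → d j = 0) (heven : Even (headSum d n)) (hca : d 0 ≤ a) :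
    d 0 ≤ tailSum n D (d 0) := by
  set c := d 0
  have hc : 0 < c := hpos 0 (Nat.zero_le b)
  have hda := hd a
  rw [if_pos rfl, if_neg hab.ne, htop a le_rfl] at hda
  rcases hca.lt_or_eq with hca | rfl
  · have hDc := hd c
    rw [if_neg hca.ne, if_neg (by omega), htop c hca.le] at hDc
    calc c = min c (D c) := by omega
      _ ≤ tailSum n D c := single_le_sum (f := fun j => min c (D j)) (fun _ _ => Nat.zero_le _)
        (by simp; omega)
  · -- If `D (c + 1) = 0`, then `d` is `c + 1` copies of `c` followed by a single `1`: an odd sum.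
    have hDc1 : 0 < D (c + 1) := by
      by_contra h0
      have hdc1 := hd (c + 1)
      have := hpos (c + 1) (by omega)
      rw [if_neg (by omega)] at hdc1
      have hb : c + 1 = b := by by_contra hb; rw [if_neg hb] at hdc1; omega
      rw [if_pos hb] at hdc1
      have hsum : headSum d n = (c + 1) * c + 1 := by
        rw [headSum_of_le (fun j hj => hzero j (by omega)) (by omega : b + 1 ≤ n),
          ← hb, headSum_succ, headSum_const fun j hj => htop j (by omega)]
        omega
      rw [hsum] at heven
      exact Nat.not_even_iff_odd.2 (Nat.even_mul_succ_self c).add_one (by rwa [mul_comm])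
    calc c ≤ min c (D c) + min c (D (c + 1)) := by omega
      _ = ∑ j ∈ {c, c + 1}, min c (D j) := (sum_pair (f := fun j => min c (D j)) (by omega)).symm
      _ ≤ tailSum n D c := sum_le_sum_of_subset_of_nonneg
          (by intro j; simp only [mem_insert, mem_singleton, mem_Ico]; omega)
          (fun _ _ _ => Nat.zero_le _)

lemma tailSum_le_add_of_le
    (hd : ∀ j, d j = D j + (if j = a then 1 else 0) + (if j = b then 1 else 0))
    (hab : a ≠ b) (hka : k ≤ D a) :
    tailSum n d k ≤ tailSum n D k + (if k ≤ D b then 0 else 1) := by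
  calc tailSum n d k
      ≤ ∑ j ∈ Ico k n, (min k (D j) + if j = b then (if k ≤ D b then 0 else 1) else 0) := by
        refine sum_le_sum fun j _ => ?_
        rw [hd j]
        rcases eq_or_ne j a with rfl | hja
        · rw [if_pos rfl, if_neg hab]
          omega
        · rw [if_neg hja]
          split_ifs with hjb <;> subst_vars <;> omega
    _ ≤ _ := by
        rw [sum_add_distrib, sum_ite_eq']
        split_ifs <;> simp [tailSum]

theorem of_eq_add (hEG : ErdosGallai n d) (heven : Even (headSum d n))
    (hd : ∀ j, d j = D j + (if j = a then 1 else 0) + (if j = b then 1 else 0))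
    (hab : a < b) (hbn : b < n) (htop : ∀ j ≤ a, d j = d 0) (hpos : ∀ j ≤ b, 0 < d j)
    (hzero : ∀ j, b < j → d j = 0) :
    ErdosGallai n D := by
  intro k
  have hL := headSum_eq_add hd k
  have hM := tailSum_le_add (n := n) hd k
  have hk := hEG k
  rcases lt_or_ge a k with hak | hka
  · split_ifs at hL hM <;> omega
  have hLk : headSum d k = k * d 0 := headSum_const fun j hj => htop j (by omega)
  rw [if_neg (by omega), if_neg (by omega)] at hL
  rcases lt_trichotomy (d 0) k with hck | hck | hck
  · have : k * d 0 ≤ k * (k - 1) := Nat.mul_le_mul_left k (by omega)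
    omega
  · have := le_tailSum_decrement hd hab hbn htop hpos hzero heven (by omega)
    have e : k * (k - 1) + k = k * k := by cases k <;> simp; ring
    rw [hck] at this hLk
    omega
  · have hda := hd a
    rw [if_pos rfl, if_neg hab.ne, htop a le_rfl] at hda
    have hdb := hd b
    rw [if_neg hab.ne', if_pos rfl] at hdb
    have hM' := tailSum_le_add_of_le (n := n) hd hab.ne (k := k) (by omega)
    split_ifs at hM' with hDb
    · omega
    · have := headSum_lt_of_const (fun j hj => htop j (by omega)) hck (by omega) hbn
        (hpos b le_rfl) (by omega) (hEG (k + 1))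
      omega

def decrement (d : ℕ → ℕ) (a b : ℕ) (j : ℕ) : ℕ :=
  d j - (if j = a then 1 else 0) - (if j = b then 1 else 0)

lemma eq_decrement_add (hab : a ≠ b) (ha : 0 < d a) (hb : 0 < d b) (j : ℕ) :
    d j = decrement d a b j + (if j = a then 1 else 0) + (if j = b then 1 else 0) := by
  unfold decrement
  split_ifs <;> subst_vars <;> omega

lemma antitone_decrement (hanti : Antitone d) (hab : a < b) (htop : d a = d 0)
    (hstep : a + 1 = b ∨ d (a + 1) < d 0) (hzero : ∀ j, b < j → d j = 0) :
    Antitone (decrement d a b) := by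
  intro i j hij
  have hji := hanti hij
  have hja : a < j → d j ≤ d (a + 1) := fun h => hanti h
  have hjb : b < j → d j = 0 := hzero j
  have hb0 := hanti (Nat.zero_le b)
  unfold decrement
  split_ifs <;> subst_vars <;> omega

lemma le_of_decrement_le (hanti : Antitone d) (hab : a ≠ b) {j : ℕ} (hja : j ≠ a)
    (hle : decrement d a b j ≤ decrement d a b b) (hb : 0 < d b) : b ≤ j := by
  by_contra! hjb
  have := hanti hjb.le
  unfold decrement at hle
  rw [if_neg hja, if_neg hjb.ne, if_neg hab.symm, if_pos rfl] at hle
  omega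

lemma card_filter_decrement_add_lt (hanti : Antitone d) (hab : a < b) (hbn : b < n)
    (hb : 0 < d b) (htop : d a = d 0) (hcb : d 0 ≤ b) :
    #{x : Fin n | x ≠ ⟨a, hab.trans hbn⟩ ∧ decrement d a b x ≤ decrement d a b b} +
      decrement d a b a < n := by
  have hsub : ({x | x ≠ ⟨a, hab.trans hbn⟩ ∧ decrement d a b x ≤ decrement d a b b} :
      Finset (Fin n)) ⊆ Ici ⟨b, hbn⟩ := by
    intro x hx
    simp only [mem_filter, mem_univ, true_and, ne_eq, Fin.ext_iff] at hx
    exact mem_Ici.2 (le_of_decrement_le hanti hab.ne hx.1 hx.2 hb)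
  have hle := card_le_card hsub
  rw [Fin.card_Ici, Fin.val_mk] at hle
  have : decrement d a b a = d 0 - 1 := by simp [decrement, hab.ne, htop]
  omega

lemma exists_last_pos (hanti : Antitone d) (hzero : ∀ j, n ≤ j → d j = 0) (h0 : 0 < d 0) :
    ∃ b < n, 0 < d b ∧ ∀ j, b < j → d j = 0 := by
  classical
  have hex : ∃ j, d j = 0 := ⟨n, hzero n le_rfl⟩
  have hp : d (Nat.find hex) = 0 := Nat.find_spec hex
  have hp0 : Nat.find hex ≠ 0 := fun h => by rw [h] at hp; omega
  refine ⟨Nat.find hex - 1, ?_, ?_, fun j hj => ?_⟩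
  · have := Nat.find_min' hex (hzero n le_rfl)
    omega
  · exact Nat.pos_of_ne_zero (Nat.find_min hex (by omega))
  · exact Nat.eq_zero_of_le_zero (hp ▸ hanti (by omega))

lemma exists_last_max (hanti : Antitone d) (hb : 0 < b) :
    ∃ a < b, (∀ j ≤ a, d j = d 0) ∧ (a + 1 = b ∨ d (a + 1) < d 0) := by
  classical
  set a := Nat.findGreatest (fun j => d j = d 0) (b - 1)
  have ha : d a = d 0 := Nat.findGreatest_spec (P := fun j => d j = d 0) (Nat.zero_le _) rfl
  have hab : a ≤ b - 1 := Nat.findGreatest_le _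
  refine ⟨a, by omega, fun j hj => le_antisymm (hanti (Nat.zero_le j)) (ha ▸ hanti hj), ?_⟩
  by_cases h : a + 1 = b
  · exact Or.inl h
  · exact Or.inr (lt_of_le_of_ne (hanti (Nat.zero_le _))
      (Nat.findGreatest_is_greatest (P := fun j => d j = d 0) (Nat.lt_succ_self a) (by omega)))

lemma apply_zero_le (hEG : ErdosGallai n d) (hbn : b < n) (hzero : ∀ j, b < j → d j = 0) :
    d 0 ≤ b := by
  have h := hEG 1
  have : tailSum n d 1 ≤ b :=
    calc tailSum n d 1 = ∑ j ∈ Ico 1 (b + 1), min 1 (d j) := by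
          rw [tailSum, ← sum_Ico_consecutive _ (by omega : 1 ≤ b + 1) (by omega : b + 1 ≤ n),
            sum_eq_zero (s := Ico (b + 1) n) fun j hj => by
              rw [hzero j (by simp at hj; omega)]; rfl, add_zero]
      _ ≤ ∑ j ∈ Ico 1 (b + 1), 1 := sum_le_sum fun _ _ => min_le_left _ _
      _ = b := by simp
  simp [headSum] at h
  omega

theorem exists_degree_eq (hanti : Antitone d) (hzero : ∀ j, n ≤ j → d j = 0)
    (heven : Even (headSum d n)) (hEG : ErdosGallai n d) :
    ∃ (G : SimpleGraph (Fin n)) (_ : DecidableRel G.Adj), ∀ v, G.degree v = d v := by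
  induction hS : headSum d n using Nat.strong_induction_on generalizing d with
  | _ S ih =>
  rcases (d 0).eq_zero_or_pos with h0 | h0
  · exact ⟨⊥, inferInstance, fun v => by simpa [h0, eq_comm] using hanti (Nat.zero_le v)⟩
  obtain ⟨b, hbn, hb, hlast⟩ := exists_last_pos hanti hzero h0
  have hcb := apply_zero_le hEG hbn hlast
  obtain ⟨a, hab, htop, hstep⟩ := exists_last_max hanti (b := b) (by omega)
  have hd := eq_decrement_add hab.ne (htop a le_rfl ▸ h0) hb
  have hsum := headSum_eq_add hd n
  rw [if_pos (by omega), if_pos hbn] at hsum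
  obtain ⟨G, _, hG⟩ := ih (headSum (decrement d a b) n) (by omega)
    (antitone_decrement hanti hab (htop a le_rfl) hstep hlast)
    (fun j hj => by have := hd j; have := hzero j hj; omega)
    (by rw [hsum] at heven; simpa [Nat.even_add_one] using heven)
    (hEG.of_eq_add heven hd hab hbn htop (fun j hj => (hanti hj).trans_lt' hb) hlast) rfl
  have hcard : #{x | x ≠ ⟨a, by omega⟩ ∧ G.degree x ≤ G.degree ⟨b, hbn⟩} + G.degree ⟨a, by omega⟩ <
      Fintype.card (Fin n) := by
    simpa only [hG, Fintype.card_fin] using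
      card_filter_decrement_add_lt hanti hab hbn hb (htop a le_rfl) hcb
  obtain ⟨H, _, hH⟩ := G.exists_degree_eq_add_add (by simp [Fin.ext_iff]; omega) hcard
  exact ⟨H, _, fun v => by rw [hH, hG, hd v]; simp [Fin.ext_iff]⟩

end ErdosGallai

lemma List.getD_append_replicate_zero (l : List ℕ) (z i : ℕ) :
    (l ++ List.replicate z 0).getD i 0 = l.getD i 0 := by
  rcases lt_or_ge i l.length with h | h
  · rw [List.getD_append _ _ _ _ h]
  · rw [List.getD_append_right _ _ _ _ h, List.getD_eq_default _ _ h, List.getD_eq_getElem?_getD,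
      List.getElem?_getD_replicate_default_eq]

lemma List.SortedGE.antitone_getD {l : List ℕ} (hl : l.SortedGE) : Antitone (l.getD · 0) := by
  intro i j hij
  dsimp only
  rcases lt_or_ge j l.length with hj | hj
  · rw [List.getD_eq_getElem _ _ hj, List.getD_eq_getElem _ _ (hij.trans_lt hj)]
    exact hl.getElem_ge_getElem_of_le hij
  · rw [List.getD_eq_default _ _ hj]
    exact Nat.zero_le _

lemma Multiset.getD_sort_ge_of_antitone {N : ℕ} {g : Fin N → ℕ} (hg : Antitone g)
    {s : Multiset ℕ} (hs : (univ.val.map g).filter (0 < ·) = s) (i : Fin N) :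
    g i = (s.sort (· ≥ ·)).getD i 0 := by
  set z := Multiset.card ((univ.val.map g).filter (¬ 0 < ·))
  have hzeros : (univ.val.map g).filter (¬ 0 < ·) = Multiset.replicate z 0 :=
    Multiset.eq_replicate.2 ⟨rfl, fun m hm => by simpa using (Multiset.mem_filter.1 hm).2⟩
  have hsorted : List.ofFn g = s.sort (· ≥ ·) ++ List.replicate z 0 := by
    refine List.Perm.eq_of_pairwise' (r := (· ≥ ·)) ?_ ?_ ?_
    · exact List.pairwise_ofFn.2 fun i j hij => hg hij.le
    · exact List.pairwise_append.2 ⟨Multiset.pairwise_sort _ _, by simp [List.pairwise_replicate],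
        fun a _ b hb => by simp [List.eq_of_mem_replicate hb]⟩
    · rw [← Multiset.coe_eq_coe, ← Fin.univ_val_map, ← Multiset.coe_add, Multiset.sort_eq,
        Multiset.coe_replicate, ← hzeros, ← hs, Multiset.filter_add_not]
  rw [← List.getD_append_replicate_zero _ z, ← hsorted,
    List.getD_eq_getElem _ _ (by simp), List.getElem_ofFn]

lemma Multiset.sum_Icc_card_filter_le (s : Multiset ℕ) (k : ℕ) :
    ∑ l ∈ Finset.Icc 1 k, Multiset.card (s.filter (l ≤ ·)) = (s.map (min k)).sum := by
  induction s using Multiset.induction_on with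
  | empty => simp
  | cons a s ih =>
    have hcount : ∑ l ∈ Finset.Icc 1 k, (if l ≤ a then 1 else 0) = min k a := by
      rw [sum_boole, show {l ∈ Finset.Icc 1 k | l ≤ a} = Finset.Icc 1 (min k a) by ext; simp; omega]
      simp
    simp only [Multiset.filter_cons, Multiset.card_add, apply_ite Multiset.card,
      Multiset.card_singleton, Multiset.card_zero, sum_add_distrib, ih, hcount,
      Multiset.map_cons, Multiset.sum_cons]

namespace Nat.Partition

variable {n : ℕ} (p : n.Partition)

def partSeq (j : ℕ) : ℕ := partOf p (j + 1)

lemma partSeq_eq_getD (j : ℕ) : p.partSeq j = (p.parts.sort (· ≥ ·)).getD j 0 := rfl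

lemma antitone_partOf : Antitone (partOf p) :=
  (Multiset.pairwise_sort _ _).sortedGE.antitone_getD.comp_monotone
    fun _ _ h => Nat.sub_le_sub_right h 1

lemma antitone_partSeq : Antitone p.partSeq :=
  (antitone_partOf p).comp_monotone fun _ _ h => Nat.succ_le_succ h

lemma partSeq_eq_zero {j : ℕ} (hj : Multiset.card p.parts ≤ j) : p.partSeq j = 0 :=
  List.getD_eq_default _ _ (by simpa using hj)

lemma map_partSeq_univ :
    univ.val.map (fun i : Fin (Multiset.card p.parts) => p.partSeq i) = p.parts := by
  conv_rhs => rw [← Multiset.sort_eq p.parts (· ≥ ·)]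
  rw [Fin.univ_val_map]
  congr 1
  refine List.ext_getElem (by simp) fun j h₁ h₂ => ?_
  rw [List.getElem_ofFn, partSeq_eq_getD, List.getD_eq_getElem _ _ h₂]

lemma sum_map_eq_sum_range_partSeq (f : ℕ → ℕ) (hf : f 0 = 0) {N : ℕ}
    (hN : Multiset.card p.parts ≤ N) :
    (p.parts.map f).sum = ∑ j ∈ range N, f (p.partSeq j) := by
  rw [← sum_range_add_sum_Ico _ hN, sum_eq_zero (s := Ico _ N) fun j hj => by
    rw [partSeq_eq_zero p (mem_Ico.1 hj).1, hf], add_zero, ← Fin.sum_univ_eq_sum_range]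
  conv_lhs => rw [← map_partSeq_univ, Multiset.map_map]
  rfl

lemma le_card_parts {k : ℕ} (hk : k ≤ partOf p k) : k ≤ Multiset.card p.parts := by
  by_contra! h
  have : partOf p k = p.partSeq (k - 1) := by unfold partSeq; congr 1; omega
  rw [this, partSeq_eq_zero p (by omega)] at hk
  omega

lemma bddAbove_durfee : BddAbove {k : ℕ | k ≤ partOf p k} :=
  ⟨Multiset.card p.parts, fun _ hk => le_card_parts p hk⟩

lemma le_durfee_iff {k : ℕ} : k ≤ durfee p ↔ k ≤ partOf p k := by
  refine ⟨fun hk => ?_, fun hk => le_csSup (bddAbove_durfee p) hk⟩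
  have hmem : durfee p ≤ partOf p (durfee p) :=
    Nat.sSup_mem (s := {k | k ≤ partOf p k}) ⟨0, Nat.zero_le _⟩ (bddAbove_durfee p)
  exact hk.trans (hmem.trans (antitone_partOf p hk))

lemma headSum_partSeq : ErdosGallai.headSum p.partSeq (Multiset.card p.parts) = n := by
  have := sum_map_eq_sum_range_partSeq p id rfl le_rfl
  rw [Multiset.map_id, p.parts_sum] at this
  exact this.symm

lemma sum_Icc_partOf (k : ℕ) : ∑ l ∈ Icc 1 k, partOf p l = ErdosGallai.headSum p.partSeq k := by
  rw [← Ico_add_one_right_eq_Icc, sum_Ico_eq_sum_range, ErdosGallai.headSum]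
  exact sum_congr rfl fun j _ => by rw [partSeq, add_comm]

lemma sum_Icc_conjPart {k N : ℕ} (hk : k ≤ partOf p k) (hN : Multiset.card p.parts ≤ N) :
    ∑ l ∈ Icc 1 k, conjPart p l = k * k + ErdosGallai.tailSum N p.partSeq k := by
  have hkN : k ≤ N := (le_card_parts p hk).trans hN
  have hhead : ∑ j ∈ range k, min k (p.partSeq j) = k * k := by
    have hle : ∀ j ∈ range k, k ≤ p.partSeq j := fun j hj =>
      hk.trans (antitone_partOf p (Nat.succ_le_of_lt (mem_range.1 hj)))
    rw [sum_congr rfl fun j hj => min_eq_left (hle j hj), sum_const, card_range, smul_eq_mul]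
  simp only [conjPart]
  rw [Multiset.sum_Icc_card_filter_le, sum_map_eq_sum_range_partSeq p _ (min_zero k) hN,
    ← sum_range_add_sum_Ico _ hkN, hhead, ErdosGallai.tailSum]

lemma sum_rank_le_iff {k N : ℕ} (hk : k ≤ partOf p k) (hN : Multiset.card p.parts ≤ N) :
    ∑ l ∈ Icc 1 k, rank p l ≤ -(k : ℤ) ↔
      ErdosGallai.headSum p.partSeq k ≤ k * (k - 1) + ErdosGallai.tailSum N p.partSeq k := by
  have e : k * (k - 1) + k = k * k := by cases k <;> simp; ring
  simp only [rank, sum_sub_distrib]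
  rw [← Nat.cast_sum, ← Nat.cast_sum, sum_Icc_partOf, sum_Icc_conjPart p hk hN]
  omega

lemma erdosGallai_partSeq
    (h : ∀ k, 1 ≤ k → k ≤ durfee p → ∑ l ∈ Icc 1 k, rank p l ≤ -(k : ℤ)) {N : ℕ}
    (hN : Multiset.card p.parts ≤ N) : ErdosGallai N p.partSeq := by
  intro k
  induction k with
  | zero => simp [ErdosGallai.headSum]
  | succ k ih =>
    by_cases hk : k + 1 ≤ partOf p (k + 1)
    · exact (sum_rank_le_iff p hk hN).1 (h _ (by omega) ((le_durfee_iff p).2 hk))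
    · exact ErdosGallai.headSum_succ_le (by unfold partSeq; omega) ih

lemma card_parts_le {N : ℕ} {G : SimpleGraph (Fin N)}
    (hG : (univ.val.map fun v => Set.ncard {w | G.Adj v w}).filter (fun d => 0 < d) = p.parts) :
    Multiset.card p.parts ≤ N := by
  rw [← hG]
  exact (Multiset.card_le_card (Multiset.filter_le _ _)).trans (by simp)

lemma exists_degree_eq_partSeq {N : ℕ} {G : SimpleGraph (Fin N)}
    (hG : (univ.val.map fun v => Set.ncard {w | G.Adj v w}).filter (fun d => 0 < d) = p.parts) :
    ∃ (H : SimpleGraph (Fin N)) (_ : DecidableRel H.Adj), ∀ i, H.degree i = p.partSeq i := by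
  classical
  set f : Fin N → ℕ := fun v => G.degree v
  set e : Fin N ≃ Fin N := Fin.revPerm.trans (Tuple.sort f)
  have hanti : Antitone (f ∘ e) := fun i j hij => Tuple.monotone_sort f (Fin.rev_le_rev.2 hij)
  have hmap : (univ.val.map (f ∘ e)).filter (0 < ·) = p.parts := by
    rw [← Multiset.map_map, Multiset.map_univ_val_equiv, ← hG]
    simp only [f, ← SimpleGraph.ncard_neighborSet_eq_degree]
    rfl
  refine ⟨G.comap e, inferInstance, fun i => ?_⟩
  rw [← (SimpleGraph.Iso.comap e G).degree_eq i]
  exact Multiset.getD_sort_ge_of_antitone hanti hmap i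

lemma isGraphical_of_degree_eq {G : SimpleGraph (Fin (Multiset.card p.parts))} [DecidableRel G.Adj]
    (hG : ∀ i, G.degree i = p.partSeq i) : IsGraphical p := by
  have hdeg : (fun v => Set.ncard {w | G.Adj v w}) = fun i : Fin _ => p.partSeq i :=
    funext fun v => (G.ncard_neighborSet_eq_degree v).trans (hG v)
  refine ⟨_, G, ?_⟩
  rw [hdeg, map_partSeq_univ]
  exact Multiset.filter_eq_self.2 fun a ha => p.parts_pos ha

end Nat.Partition

/-- Nash–Williams criterion: a partition of an even integer `n` is graphical
iff `∑_{l=1}^k R_l ≤ -k` for all `1 ≤ k ≤ K`, where `K` is the Durfee square size. -/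
theorem nash_williams_criterion (n : ℕ) (hn : Even n) (p : n.Partition) :
    IsGraphical p ↔
      ∀ k : ℕ, 1 ≤ k → k ≤ durfee p →
        (∑ l ∈ Finset.Icc 1 k, rank p l) ≤ -(k : ℤ) := by
  constructor
  · rintro ⟨N, G, hG⟩ k - hk
    obtain ⟨H, _, hH⟩ := p.exists_degree_eq_partSeq hG
    rw [p.le_durfee_iff] at hk
    have hN := p.card_parts_le hG
    exact (p.sum_rank_le_iff hk hN).2
      (ErdosGallai.headSum_le_of_degree_eq H hH ((p.le_card_parts hk).trans hN))
  · intro h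
    obtain ⟨G, _, hG⟩ := ErdosGallai.exists_degree_eq p.antitone_partSeq
      (fun _ => p.partSeq_eq_zero) (by rwa [p.headSum_partSeq]) (p.erdosGallai_partSeq h le_rfl)
    exact p.isGraphical_of_degree_eq hG
end
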